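/- For all integers L ≥ 1 and all integers a with |a| ≤ L, T_0(L,a) = q^{(a−L)/2} ( (1+q^L)/(1+q^a) · T_1(L,a) − (1−q^L)/(1+q^a) · T_1(L−1,a) ). -/
import Mathlib


open Finset

/-- The variable `q`, realized as the generator of the field of rational functions over `ℚ`. -/
noncomputable def qq : RatFunc ℚ := RatFunc.X

/-- `(x)_n = ∏_{j=1}^n (1 - x^j)`. -/
noncomputable def qPoch (x : RatFunc ℚ) (n : ℕ) : RatFunc ℚ :=
  ∏ j ∈ Finset.range n, (1 - x ^ (j + 1))

/-- Gaussian binomial coefficient `[n choose k]_x`, zero unless `0 ≤ k ≤ n`. -/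
noncomputable def qBin (x : RatFunc ℚ) (n k : ℤ) : RatFunc ℚ :=
  if 0 ≤ k ∧ k ≤ n then qPoch x n.toNat / (qPoch x k.toNat * qPoch x (n - k).toNat) else 0

/-- The `q`-trinomial coefficient `[L, b; a]_2` in base `x`. -/
noncomputable def qTri (x : RatFunc ℚ) (L : ℕ) (b a : ℤ) : RatFunc ℚ :=
  ∑ k ∈ Finset.range (L + 1),
    x ^ ((k : ℤ) * (k + b)) * qBin x (L : ℤ) (k : ℤ) * qBin x ((L : ℤ) - k) ((k : ℤ) + a)

/-- The `q`-trinomial `T_n(L, a)`, written in terms of `s = q^{1/2}` (so the base is `s^2`):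
`T_n(L,a) = ∑ s^{r(r-n)} (s²)_L / ((s²)_{(L-a-r)/2} (s²)_{(L+a-r)/2} (s²)_r)`,
the sum over `r ≥ 0` with `L - a - r` even and `r ≤ L - |a|`; zero for `|a| > L`. -/
noncomputable def qT (s : RatFunc ℚ) (n : ℤ) (L : ℕ) (a : ℤ) : RatFunc ℚ :=
  ∑ r ∈ Finset.range (L + 1),
    if Even ((L : ℤ) - a - r) ∧ (r : ℤ) ≤ (L : ℤ) - |a| then
      s ^ ((r : ℤ) * ((r : ℤ) - n)) * qPoch (s ^ 2) L /
        (qPoch (s ^ 2) (((L : ℤ) - a - r) / 2).toNat *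
          qPoch (s ^ 2) (((L : ℤ) + a - r) / 2).toNat * qPoch (s ^ 2) r)
    else 0

/-- The Cartan matrix of the Lie algebra `A_n`. -/
def cartanA (n : ℕ) (i j : Fin n) : ℤ :=
  if i = j then 2 else if |(i : ℤ) - (j : ℤ)| = 1 then -1 else 0

set_option maxHeartbeats 1600000

lemma qq_ne_zero : qq ≠ 0 := RatFunc.X_ne_zero

lemma qq_pow_ne_one {n : ℕ} (h : n ≠ 0) : (qq : RatFunc ℚ) ^ n ≠ 1 := by
  intro hEq
  have : (algebraMap (Polynomial ℚ) (RatFunc ℚ)) (Polynomial.X ^ n) =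
      (algebraMap (Polynomial ℚ) (RatFunc ℚ)) 1 := by
    simpa [map_pow, RatFunc.algebraMap_X, qq] using hEq
  have hx : (Polynomial.X : Polynomial ℚ) ^ n = 1 := RatFunc.algebraMap_injective ℚ this
  have := congrArg Polynomial.natDegree hx
  simp [Polynomial.natDegree_X_pow] at this
  exact h this

lemma qq_pow_ne_neg_one {n : ℕ} : (qq : RatFunc ℚ) ^ n ≠ -1 := by
  intro hEq
  have : (algebraMap (Polynomial ℚ) (RatFunc ℚ)) (Polynomial.X ^ n) =
      (algebraMap (Polynomial ℚ) (RatFunc ℚ)) (-1) := by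
    simpa [map_pow, RatFunc.algebraMap_X, qq] using hEq
  have hx : (Polynomial.X : Polynomial ℚ) ^ n = -1 := RatFunc.algebraMap_injective ℚ this
  rcases Nat.eq_zero_or_pos n with h0 | h0
  · simp [h0] at hx
    norm_num at hx
  · have h2 := congrArg (Polynomial.eval 2) hx
    have h0' := congrArg (Polynomial.eval 0) hx
    simp at h2 h0'
    rcases Nat.eq_zero_or_pos n with h|h
    · omega
    · rw [zero_pow (by omega)] at h0'
      norm_num at h0' 

lemma qq_zpow_ne_neg_one (z : ℤ) : (qq : RatFunc ℚ) ^ z ≠ -1 := by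
  intro hEq
  rcases le_or_gt 0 z with hz | hz
  · lift z to ℕ using hz
    rw [zpow_natCast] at hEq
    exact qq_pow_ne_neg_one hEq
  · have h1 : (qq : RatFunc ℚ) ^ (-z) = (-1 : RatFunc ℚ)⁻¹ := by rw [← hEq, zpow_neg]
    have h2 : (qq : RatFunc ℚ) ^ (-z) = -1 := by rw [h1]; norm_num
    have hz' : 0 ≤ -z := by omega
    lift (-z) to ℕ using hz' with m hm
    rw [zpow_natCast] at h2
    exact qq_pow_ne_neg_one h2

lemma one_sub_qq_pow_ne {n : ℕ} (h : n ≠ 0) : (1 : RatFunc ℚ) - qq ^ n ≠ 0 := by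
  intro hEq
  exact qq_pow_ne_one h (by linear_combination -hEq)

lemma qPoch_ne_zero (n : ℕ) : qPoch (qq ^ 2) n ≠ 0 := by
  rw [qPoch]
  apply prod_ne_zero_iff.mpr
  intro j _
  have : ((qq : RatFunc ℚ) ^ 2) ^ (j + 1) = qq ^ (2 * (j + 1)) := by rw [← pow_mul]
  rw [this]
  exact one_sub_qq_pow_ne (by omega)

lemma sq_zpow (z : ℤ) : ((qq : RatFunc ℚ) ^ 2) ^ z = qq ^ (2 * z) := by
  rcases le_or_gt 0 z with hz | hz
  · lift z to ℕ using hz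
    rw [zpow_natCast, ← pow_mul, ← zpow_natCast]
    norm_cast
  · have h1 : ((qq:RatFunc ℚ) ^ 2) ^ z = (((qq:RatFunc ℚ) ^ 2) ^ (-z))⁻¹ := by
      rw [← zpow_neg, neg_neg]
    have h2 : (qq:RatFunc ℚ) ^ (2*z) = ((qq:RatFunc ℚ) ^ (2*(-z)))⁻¹ := by
      rw [← zpow_neg]; ring_nf
    rw [h1, h2]
    congr 1
    have hz' : 0 ≤ -z := by omega
    lift (-z) to ℕ using hz' with m hm
    rw [zpow_natCast, ← pow_mul, ← zpow_natCast]
    norm_cast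

lemma one_add_Q_zpow_ne (z : ℤ) : (1 : RatFunc ℚ) + (qq ^ 2) ^ z ≠ 0 := by
  rw [sq_zpow]
  intro hEq
  exact qq_zpow_ne_neg_one (2 * z) (by linear_combination hEq)

lemma one_sub_qq_zpow_ne {z : ℤ} (h : 0 < z) : (1 : RatFunc ℚ) - qq ^ z ≠ 0 := by
  lift z to ℕ using (by omega : (0:ℤ) ≤ z)
  rw [zpow_natCast]
  exact one_sub_qq_pow_ne (by exact_mod_cast h.ne')

lemma qPoch_succ (n : ℕ) : qPoch (qq ^ 2) (n + 1) = qPoch (qq ^ 2) n * (1 - (qq ^ 2) ^ (n + 1)) := by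
  rw [qPoch, qPoch, prod_range_succ]

lemma Qpow_eq (m : ℕ) : ((qq : RatFunc ℚ) ^ 2) ^ m = qq ^ (2 * (m : ℤ)) := by
  rw [← zpow_natCast ((qq : RatFunc ℚ)^2) m, sq_zpow]


lemma core (u v z : RatFunc ℚ) (hz : z ≠ 0) :
    (u * z + v * z) - (1 + u * v * z ^ 2) * z⁻¹ + qq ^ 2 * z⁻¹ ^ 3 * (1 - z ^ 2)
      = qq ^ 2 * z⁻¹ ^ 3 * (1 - z ^ 2 * (qq ^ 2)⁻¹) * (1 - z ^ 2)
        - z * (1 - u) * (1 - v) := by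
  have hq : qq ≠ 0 := qq_ne_zero
  field_simp
  ring

lemma zpow_nat_pow (w : ℤ) (m : ℕ) : ((qq : RatFunc ℚ) ^ w) ^ m = qq ^ (w * m) := by
  induction m with
  | zero => simp
  | succ k ih =>
      rw [pow_succ, ih, ← zpow_add₀ qq_ne_zero]
      congr 1; push_cast; ring

lemma zpow_mul_zpow (u v : ℤ) : (qq : RatFunc ℚ) ^ u * qq ^ v = qq ^ (u + v) :=
  (zpow_add₀ qq_ne_zero u v).symm

lemma zpow_inv' (u : ℤ) : ((qq : RatFunc ℚ) ^ u)⁻¹ = qq ^ (-u) := (zpow_neg qq u).symm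

/-- summation condition -/
def scond (L : ℕ) (a : ℤ) (r : ℕ) : Prop :=
  Even ((L : ℤ) - a - r) ∧ (r : ℤ) ≤ (L : ℤ) - |a|

instance scond.dec (L : ℕ) (a : ℤ) (r : ℕ) : Decidable (scond L a r) := by
  unfold scond; infer_instance

def M1 (L : ℕ) (a : ℤ) (r : ℕ) : ℕ := (((L : ℤ) - a - r) / 2).toNat
def M2 (L : ℕ) (a : ℤ) (r : ℕ) : ℕ := (((L : ℤ) + a - r) / 2).toNat

noncomputable def cc (L : ℕ) (a : ℤ) (r : ℕ) : RatFunc ℚ :=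
  qPoch (qq ^ 2) L / (qPoch (qq ^ 2) (M1 L a r) * qPoch (qq ^ 2) (M2 L a r) * qPoch (qq ^ 2) r)

noncomputable def GG (L : ℕ) (a : ℤ) (r : ℕ) : RatFunc ℚ :=
  if scond L a r then
    qq ^ ((r : ℤ) * r) * qq ^ 2 * ((qq ^ (r : ℤ))⁻¹) ^ 3 *
      (1 - (qq ^ (r : ℤ)) ^ 2 * (qq ^ 2)⁻¹) * (1 - (qq ^ (r : ℤ)) ^ 2) * cc L a r
  else 0

noncomputable def Fsh (L : ℕ) (a : ℤ) : ℕ → RatFunc ℚ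
  | 0 => 0
  | (k + 1) => if scond (L - 1) a k then qq ^ ((k : ℤ) * ((k : ℤ) - 1)) * cc (L - 1) a k else 0

lemma qT_eq (n' : ℤ) (L : ℕ) (a : ℤ) :
    qT qq n' L a = ∑ r ∈ Finset.range (L + 1),
      if scond L a r then qq ^ ((r : ℤ) * ((r : ℤ) - n')) * cc L a r else 0 := by
  rw [qT]
  refine Finset.sum_congr rfl fun r _ => ?_
  by_cases hc : scond L a r
  · have h1 : Even ((L : ℤ) - a - r) ∧ (r : ℤ) ≤ (L : ℤ) - |a| := hc
    rw [if_pos h1, if_pos hc, cc, M1, M2, mul_div_assoc]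
  · have h1 : ¬(Even ((L : ℤ) - a - r) ∧ (r : ℤ) ≤ (L : ℤ) - |a|) := fun hh => hc hh
    rw [if_neg h1, if_neg hc]

lemma scondshift {L : ℕ} (hL : 1 ≤ L) (a : ℤ) (k : ℕ) :
    scond (L - 1) a k ↔ scond L a (k + 1) := by
  unfold scond
  have hcast : ((L - 1 : ℕ) : ℤ) = (L : ℤ) - 1 := by omega
  rw [hcast]
  have h1 : (L : ℤ) - 1 - a - k = (L : ℤ) - a - ((k + 1 : ℕ) : ℤ) := by push_cast; ring
  rw [h1]
  constructor <;> (rintro ⟨he, hle⟩; exact ⟨he, by push_cast at hle ⊢; linarith⟩)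

lemma M1shift {L : ℕ} (hL : 1 ≤ L) (a : ℤ) (k : ℕ) : M1 (L - 1) a k = M1 L a (k + 1) := by
  unfold M1
  have h1 : ((L - 1 : ℕ) : ℤ) - a - k = (L : ℤ) - a - ((k + 1 : ℕ) : ℤ) := by omega
  rw [h1]

lemma M2shift {L : ℕ} (hL : 1 ≤ L) (a : ℤ) (k : ℕ) : M2 (L - 1) a k = M2 L a (k + 1) := by
  unfold M2
  have h1 : ((L - 1 : ℕ) : ℤ) + a - k = (L : ℤ) + a - ((k + 1 : ℕ) : ℤ) := by omega
  rw [h1]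

lemma cc_ne_zero (L : ℕ) (a : ℤ) (r : ℕ) : cc L a r ≠ 0 := by
  rw [cc]
  exact div_ne_zero (qPoch_ne_zero _)
    (mul_ne_zero (mul_ne_zero (qPoch_ne_zero _) (qPoch_ne_zero _)) (qPoch_ne_zero _))

/-- The per-index telescoping step. -/
lemma step (L : ℕ) (hL : 1 ≤ L) (a : ℤ) (ha : |a| ≤ (L : ℤ)) (r : ℕ) :
    (1 + (qq ^ 2) ^ a) * qq ^ ((L : ℤ) - a) *
        (if scond L a r then qq ^ ((r : ℤ) * ((r : ℤ) - 0)) * cc L a r else 0)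
      - (1 + (qq ^ 2) ^ (L : ℤ)) *
        (if scond L a r then qq ^ ((r : ℤ) * ((r : ℤ) - 1)) * cc L a r else 0)
      + (1 - (qq ^ 2) ^ (L : ℤ)) * Fsh L a r
      = GG L a r - GG L a (r + 2) := by
  have hq : qq ≠ 0 := qq_ne_zero
  by_cases hc : scond L a r
  · -- main case
    obtain ⟨heven, hle⟩ := hc
    have haa : a ≤ |a| := le_abs_self a
    have hna : -a ≤ |a| := abs_neg a ▸ le_abs_self (-a)
    have habs : |a| = a ∨ |a| = -a := abs_choice a
    have hge1 : 0 ≤ (L : ℤ) - a - r := by linarith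
    have hge2 : 0 ≤ (L : ℤ) + a - r := by linarith
    obtain ⟨tt, htt⟩ := heven
    have hM1 : (M1 L a r : ℤ) * 2 = (L : ℤ) - a - r := by unfold M1; omega
    have hM2 : (M2 L a r : ℤ) * 2 = (L : ℤ) + a - r := by unfold M2; omega
    set u : RatFunc ℚ := qq ^ ((L : ℤ) - a - r) with hudef
    set v : RatFunc ℚ := qq ^ ((L : ℤ) + a - r) with hvdef
    set z : RatFunc ℚ := qq ^ (r : ℤ) with hzdef
    set t : RatFunc ℚ := qq ^ ((r : ℤ) * r) with htdef
    set C : RatFunc ℚ := cc L a r with hCdef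
    clear_value u v z t C
    have hu : u ≠ 0 := by rw [hudef]; exact zpow_ne_zero _ hq
    have hv : v ≠ 0 := by rw [hvdef]; exact zpow_ne_zero _ hq
    have hz : z ≠ 0 := by rw [hzdef]; exact zpow_ne_zero _ hq
    have ht : t ≠ 0 := by rw [htdef]; exact zpow_ne_zero _ hq
    have hC : C ≠ 0 := by rw [hCdef]; exact cc_ne_zero L a r
    have hc' : scond L a r := ⟨⟨tt, htt⟩, hle⟩
    have e0 : qq ^ ((r : ℤ) * ((r : ℤ) - 0)) = t := by
      rw [htdef]; congr 1; all_goals ring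
    have e1 : qq ^ ((r : ℤ) * ((r : ℤ) - 1)) = t * z⁻¹ := by
      rw [htdef, hzdef, zpow_inv', zpow_mul_zpow]; congr 1; all_goals ring
    have eFirst : (1 + (qq ^ 2 : RatFunc ℚ) ^ a) * qq ^ ((L : ℤ) - a) = u * z + v * z := by
      have h1 : qq ^ ((L : ℤ) - a) = u * z := by
        rw [hudef, hzdef, zpow_mul_zpow]; congr 1; all_goals ring
      have h2 : (qq ^ 2 : RatFunc ℚ) ^ a * qq ^ ((L : ℤ) - a) = v * z := by
        rw [sq_zpow, hvdef, hzdef, zpow_mul_zpow, zpow_mul_zpow]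
        congr 1; all_goals ring
      calc (1 + (qq ^ 2 : RatFunc ℚ) ^ a) * qq ^ ((L : ℤ) - a)
          = qq ^ ((L : ℤ) - a) + (qq ^ 2 : RatFunc ℚ) ^ a * qq ^ ((L : ℤ) - a) := by ring
        _ = u * z + v * z := by rw [h2, h1]
    have eSecond : (qq ^ 2 : RatFunc ℚ) ^ (L : ℤ) = u * v * z ^ 2 := by
      rw [sq_zpow, hudef, hvdef, hzdef, zpow_nat_pow, zpow_mul_zpow, zpow_mul_zpow]
      congr 1; all_goals (push_cast; ring)
    -- the Fsh piece
    have eFsh' : (1 - (qq ^ 2) ^ (L : ℤ)) * Fsh L a r * z ^ 3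
        = t * qq ^ 2 * (1 - z ^ 2) * C := by
      cases r with
      | zero =>
          have hz1 : z = 1 := by rw [hzdef]; norm_num
          simp [Fsh, hz1]
      | succ k =>
          have hck : scond (L - 1) a k := (scondshift hL a k).mpr hc'
          have hzL : (1 - (qq ^ 2) ^ (L : ℤ)) = (1 - (qq ^ 2 : RatFunc ℚ) ^ L) := by
            rw [← zpow_natCast (qq ^ 2 : RatFunc ℚ) L]
          have hPL : qPoch (qq ^ 2) L = qPoch (qq ^ 2) (L - 1) * (1 - (qq ^ 2) ^ L) := by
            conv_lhs => rw [show L = (L - 1) + 1 by omega]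
            rw [qPoch_succ]
            rw [show (L - 1) + 1 = L by omega]
          have hPr : qPoch (qq ^ 2) (k + 1) = qPoch (qq ^ 2) k * (1 - (qq ^ 2) ^ (k + 1)) :=
            qPoch_succ k
          have hek3 : t * qq ^ 2 = qq ^ ((k : ℤ) * ((k : ℤ) - 1)) * z ^ 3 := by
            rw [htdef, hzdef, zpow_nat_pow, ← zpow_natCast qq 2, zpow_mul_zpow, zpow_mul_zpow]
            congr 1; all_goals (push_cast; ring)
          have hzz : (1 : RatFunc ℚ) - z ^ 2 = 1 - (qq ^ 2 : RatFunc ℚ) ^ (k + 1) := by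
            rw [hzdef, zpow_nat_pow, Qpow_eq]
            congr 2; all_goals (push_cast; ring)
          simp only [Fsh]
          rw [if_pos hck, hek3, hzz, hzL, hCdef, cc, cc, M1shift hL a k, M2shift hL a k,
            hPL, hPr]
          have h1 := qPoch_ne_zero (M1 L a (k + 1))
          have h2 := qPoch_ne_zero (M2 L a (k + 1))
          have h3 := qPoch_ne_zero k
          have h4 := qPoch_ne_zero (L - 1)
          have h5 : (1 : RatFunc ℚ) - (qq ^ 2 : RatFunc ℚ) ^ L ≠ 0 := by
            rw [Qpow_eq]; exact one_sub_qq_zpow_ne (by positivity)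
          have h6 : (1 : RatFunc ℚ) - (qq ^ 2 : RatFunc ℚ) ^ (k + 1) ≠ 0 := by
            rw [Qpow_eq]; exact one_sub_qq_zpow_ne (by positivity)
          field_simp
    have eFsh : (1 - (qq ^ 2) ^ (L : ℤ)) * Fsh L a r
        = t * qq ^ 2 * (z⁻¹) ^ 3 * (1 - z ^ 2) * C := by
      have h9 : (z : RatFunc ℚ) ^ 3 ≠ 0 := pow_ne_zero _ hz
      have h10 : t * qq ^ 2 * (z⁻¹) ^ 3 * (1 - z ^ 2) * C
          = t * qq ^ 2 * (1 - z ^ 2) * C / z ^ 3 := by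
        rw [div_eq_mul_inv, ← inv_pow]; ring
      rw [h10, eq_div_iff h9]
      linear_combination eFsh'
    -- the GG r piece
    have eGr : GG L a r
        = t * qq ^ 2 * (z⁻¹) ^ 3 * (1 - z ^ 2 * (qq ^ 2)⁻¹) * (1 - z ^ 2) * C := by
      rw [GG, if_pos hc', ← htdef, ← hzdef, ← hCdef]
    -- the GG (r+2) piece
    have eGr2 : GG L a (r + 2) = t * z * (1 - u) * (1 - v) * C := by
      by_cases hc2 : scond L a (r + 2)
      · have hle2 := hc2.2
        have hle2' : (r : ℤ) + 2 ≤ (L : ℤ) - |a| := by push_cast at hle2; linarith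
        have hle2a : (r : ℤ) + 2 ≤ (L : ℤ) - a := by linarith
        have hle2b : (r : ℤ) + 2 ≤ (L : ℤ) + a := by linarith
        have hm1 : M1 L a r = M1 L a (r + 2) + 1 := by
          unfold M1
          have h1 : ((r + 2 : ℕ) : ℤ) = (r : ℤ) + 2 := by push_cast; ring
          rw [h1]; omega
        have hm2 : M2 L a r = M2 L a (r + 2) + 1 := by
          unfold M2
          have h1 : ((r + 2 : ℕ) : ℤ) = (r : ℤ) + 2 := by push_cast; ring
          rw [h1]; omega
        have hQ1 : (qq ^ 2 : RatFunc ℚ) ^ (M1 L a (r + 2) + 1) = u := by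
          rw [Qpow_eq, hudef]; congr 1; omega
        have hQ2 : (qq ^ 2 : RatFunc ℚ) ^ (M2 L a (r + 2) + 1) = v := by
          rw [Qpow_eq, hvdef]; congr 1; omega
        have hPr2 : qPoch (qq ^ 2) (r + 2)
            = qPoch (qq ^ 2) r * ((1 - (qq ^ 2 : RatFunc ℚ) ^ (r + 1)) *
              (1 - (qq ^ 2 : RatFunc ℚ) ^ (r + 2))) := by
          rw [show r + 2 = (r + 1) + 1 by omega, qPoch_succ, qPoch_succ]
          ring
        have hmono : qq ^ (((r + 2 : ℕ) : ℤ) * ((r + 2 : ℕ) : ℤ)) * qq ^ 2 *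
            ((qq ^ ((r + 2 : ℕ) : ℤ))⁻¹) ^ 3 = t * z := by
          rw [htdef, hzdef, zpow_inv', zpow_nat_pow, ← zpow_natCast qq 2,
            zpow_mul_zpow, zpow_mul_zpow, zpow_mul_zpow]
          congr 1; all_goals (push_cast; ring)
        have hfac1 : (qq ^ ((r + 2 : ℕ) : ℤ)) ^ 2 * (qq ^ 2 : RatFunc ℚ)⁻¹
            = z ^ 2 * qq ^ 2 := by
          rw [hzdef, zpow_nat_pow, zpow_nat_pow, ← zpow_natCast qq 2, zpow_inv',
            zpow_mul_zpow, zpow_mul_zpow]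
          congr 1; all_goals (push_cast; ring)
        have hfac2 : (qq ^ ((r + 2 : ℕ) : ℤ)) ^ 2 = z ^ 2 * qq ^ 4 := by
          rw [hzdef, zpow_nat_pow, zpow_nat_pow, ← zpow_natCast qq 4, zpow_mul_zpow]
          congr 1; all_goals (push_cast; ring)
        have hq12 : (qq ^ 2 : RatFunc ℚ) ^ (r + 1) = z ^ 2 * qq ^ 2 := by
          rw [Qpow_eq, hzdef, zpow_nat_pow, ← zpow_natCast qq 2, zpow_mul_zpow]
          congr 1; all_goals (push_cast; ring)
        have hq22 : (qq ^ 2 : RatFunc ℚ) ^ (r + 2) = z ^ 2 * qq ^ 4 := by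
          rw [Qpow_eq, hzdef, zpow_nat_pow, ← zpow_natCast qq 4, zpow_mul_zpow]
          congr 1; all_goals (push_cast; ring)
        rw [GG, if_pos hc2, hCdef]
        simp only [cc]
        rw [hmono, hfac1, hfac2, hm1, hm2, qPoch_succ (M1 L a (r + 2)),
          qPoch_succ (M2 L a (r + 2)), hPr2, hQ1, hQ2, hq12, hq22]
        have h1 := qPoch_ne_zero (M1 L a (r + 2))
        have h2 := qPoch_ne_zero (M2 L a (r + 2))
        have h3 := qPoch_ne_zero r
        have h4 := qPoch_ne_zero L
        have h5 : (1 : RatFunc ℚ) - z ^ 2 * qq ^ 2 ≠ 0 := by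
          rw [← hq12, Qpow_eq]; exact one_sub_qq_zpow_ne (by positivity)
        have h6 : (1 : RatFunc ℚ) - z ^ 2 * qq ^ 4 ≠ 0 := by
          rw [← hq22, Qpow_eq]; exact one_sub_qq_zpow_ne (by positivity)
        have h7 : (1 : RatFunc ℚ) - u ≠ 0 := by
          rw [hudef]; exact one_sub_qq_zpow_ne (by omega)
        have h8 : (1 : RatFunc ℚ) - v ≠ 0 := by
          rw [hvdef]; exact one_sub_qq_zpow_ne (by omega)
        field_simp
      · -- boundary case
        rw [GG, if_neg hc2]
        rcases habs with hA | hA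
        · have hr0 : (L : ℤ) - a - r = 0 := by
            rw [hA] at hle
            by_contra hne
            exact hc2 ⟨⟨tt - 1, by push_cast; omega⟩, by rw [hA]; push_cast; omega⟩
          have hone : u = 1 := by rw [hudef, hr0, zpow_zero]
          rw [hone]
          ring
        · have hr0 : (L : ℤ) + a - r = 0 := by
            rw [hA] at hle
            by_contra hne
            exact hc2 ⟨⟨tt - 1, by push_cast; omega⟩, by rw [hA]; push_cast; omega⟩
          have hone : v = 1 := by rw [hvdef, hr0, zpow_zero]
          rw [hone]
          ring
    rw [if_pos hc', if_pos hc', e0, e1, eFsh, eGr, eGr2, eFirst, eSecond]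
    linear_combination (t * C) * core u v z hz
  · -- condition fails : everything vanishes
    have hc2 : ¬ scond L a (r + 2) := by
      rintro ⟨he, hle⟩
      apply hc
      obtain ⟨tt, htt⟩ := he
      refine ⟨⟨tt + 1, by push_cast at htt ⊢; omega⟩, ?_⟩
      push_cast at hle ⊢
      linarith
    have hFsh0 : Fsh L a r = 0 := by
      cases r with
      | zero => rfl
      | succ k =>
          simp only [Fsh]
          rw [if_neg (fun hh => hc ((scondshift hL a k).mp hh))]
    rw [if_neg hc, if_neg hc, hFsh0, GG, GG, if_neg hc, if_neg hc2]
    ring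

lemma telescope (g : ℕ → RatFunc ℚ) (n : ℕ) :
    ∑ r ∈ Finset.range n, (g r - g (r + 2)) = g 0 + g 1 - g n - g (n + 1) := by
  induction n with
  | zero => simp
  | succ m ih =>
      rw [Finset.sum_range_succ, ih, show m + 1 + 1 = m + 2 from rfl]
      ring

lemma GG_zero (L : ℕ) (a : ℤ) : GG L a 0 = 0 := by
  rw [GG]
  split_ifs with hcc
  · norm_num
  · rfl

lemma GG_one (L : ℕ) (a : ℤ) : GG L a 1 = 0 := by
  rw [GG]
  split_ifs with hcc
  · have h1 : ((qq : RatFunc ℚ) ^ ((1 : ℕ) : ℤ)) ^ 2 * ((qq : RatFunc ℚ) ^ 2)⁻¹ = 1 := by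
      push_cast
      rw [zpow_one]
      exact mul_inv_cancel₀ (pow_ne_zero 2 qq_ne_zero)
    rw [h1]
    ring
  · rfl

lemma GG_top (L : ℕ) (a : ℤ) {m : ℕ} (hm : L < m) : GG L a m = 0 := by
  rw [GG, if_neg]
  rintro ⟨-, hle⟩
  have h0 : 0 ≤ |a| := abs_nonneg a
  have h1 : (L : ℤ) < (m : ℤ) := by exact_mod_cast hm
  linarith

theorem stmt18 (L : ℕ) (hL : 1 ≤ L) (a : ℤ) (h : |a| ≤ (L : ℤ)) :
    qT qq 0 L a =
      qq ^ (a - (L : ℤ)) *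
        ((1 + (qq ^ 2) ^ (L : ℤ)) / (1 + (qq ^ 2) ^ a) * qT qq 1 L a -
          (1 - (qq ^ 2) ^ (L : ℤ)) / (1 + (qq ^ 2) ^ a) * qT qq 1 (L - 1) a) := by
  have hq : qq ≠ 0 := qq_ne_zero
  have hA : (1 : RatFunc ℚ) + (qq ^ 2) ^ a ≠ 0 := one_add_Q_zpow_ne a
  have key : (1 + (qq ^ 2) ^ a) * qq ^ ((L : ℤ) - a) * qT qq 0 L a
      = (1 + (qq ^ 2) ^ (L : ℤ)) * qT qq 1 L a
        - (1 - (qq ^ 2) ^ (L : ℤ)) * qT qq 1 (L - 1) a := by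
    rw [qT_eq 0 L a, qT_eq 1 L a, qT_eq 1 (L - 1) a]
    have hFsh : (∑ k ∈ Finset.range ((L - 1) + 1),
        if scond (L - 1) a k then qq ^ ((k : ℤ) * ((k : ℤ) - 1)) * cc (L - 1) a k else 0)
        = ∑ r ∈ Finset.range (L + 1), Fsh L a r := by
      rw [show L + 1 = ((L - 1) + 1) + 1 by omega,
        Finset.sum_range_succ' (Fsh L a) ((L - 1) + 1)]
      simp only [Fsh]
      rw [add_zero]
    rw [hFsh, Finset.mul_sum, Finset.mul_sum, Finset.mul_sum]
    rw [← sub_eq_zero, ← Finset.sum_sub_distrib, ← Finset.sum_sub_distrib]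
    have hcongr : ∀ r ∈ Finset.range (L + 1),
        ((1 + (qq ^ 2) ^ a) * qq ^ ((L : ℤ) - a) *
            (if scond L a r then qq ^ ((r : ℤ) * ((r : ℤ) - 0)) * cc L a r else 0)
          - ((1 + (qq ^ 2) ^ (L : ℤ)) *
              (if scond L a r then qq ^ ((r : ℤ) * ((r : ℤ) - 1)) * cc L a r else 0)
            - (1 - (qq ^ 2) ^ (L : ℤ)) * Fsh L a r))
          = GG L a r - GG L a (r + 2) := by
      intro r _
      linear_combination step L hL a h r
    rw [Finset.sum_congr rfl hcongr, telescope (GG L a) (L + 1),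
      GG_zero, GG_one, GG_top L a (by omega : L < L + 1),
      GG_top L a (by omega : L < L + 1 + 1)]
    ring
  have hzpow : qq ^ (a - (L : ℤ)) * qq ^ ((L : ℤ) - a) = 1 := by
    rw [zpow_mul_zpow, show a - (L : ℤ) + ((L : ℤ) - a) = 0 by ring, zpow_zero]
  apply mul_left_cancel₀ hA
  have expand : (1 + (qq ^ 2) ^ a) *
      (qq ^ (a - (L : ℤ)) *
        ((1 + (qq ^ 2) ^ (L : ℤ)) / (1 + (qq ^ 2) ^ a) * qT qq 1 L a -
          (1 - (qq ^ 2) ^ (L : ℤ)) / (1 + (qq ^ 2) ^ a) * qT qq 1 (L - 1) a))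
      = qq ^ (a - (L : ℤ)) *
        ((1 + (qq ^ 2) ^ (L : ℤ)) * qT qq 1 L a
          - (1 - (qq ^ 2) ^ (L : ℤ)) * qT qq 1 (L - 1) a) := by
    field_simp
  rw [expand, ← key,
    show qq ^ (a - (L : ℤ)) * ((1 + (qq ^ 2) ^ a) * qq ^ ((L : ℤ) - a) * qT qq 0 L a)
      = (qq ^ (a - (L : ℤ)) * qq ^ ((L : ℤ) - a)) * ((1 + (qq ^ 2) ^ a) * qT qq 0 L a) by ring,
    hzpow, one_mul]
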